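/- arXiv:1806.01441 — 2 statements merged into one kernel-verified Lean document; each statement's English description precedes it below -/
import Mathlib

section
/- (Mittag-Leffler form of the generalized Gronwall inequality) Under the hypotheses of the generalized Gronwall inequality—u, v continuous nonnegative, g continuous nonnegative nondecreasing, r continuous nonnegative on a ≤ τ ≤ t ≤ b, ψ increasing C¹, 0 < α ≤ 1, and u(t) ≤ v(t) + g(t) ∫_a^t ψ'(τ)(ψ(t)−ψ(τ))^{α−1} r(t,τ) u(τ) dτ—if in addition v is nondecreasing and t ↦ r(t,t) is nondecreasing with r(t,τ) ≤ r(t,t) for τ ≤ t, then u(t) ≤ v(t) · E_α(g(t) r(t,t) Γ(α) (ψ(t)−ψ(a))^α) for all t ∈ [a,b]. -/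
/-!
Fix `t` and freeze the coefficients at `t`: with `K = g t * r t t`, every `s ≤ t` satisfies
`u s ≤ v t + K * ∫_a^s ψ' τ (ψ s - ψ τ)^(α-1) u τ dτ`. Starting from `u ≤ max_{[a,t]} u` and
feeding the bound back in `n` times gives `u s ≤ v t * ∑_{k<n} E_k (z s) + M * E_n (z s)` with
`E_k z = z^k / Γ(αk+1)` and `z s = K Γ(α) (ψ s - ψ a)^α`, because the substitution `y = ψ τ` turns
the kernel integral of `(ψ τ - ψ a)^β` into a Beta integral, which maps `E_k` to `E_{k+1}`.
The remainder `M * E_n` tends to `0` since `Γ(x+1) ≥ R^x e^{-R}` makes the series converge.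
-/

open MeasureTheory Set

/-- One-parameter Mittag-Leffler function `E_α(z) = ∑ z^k / Γ(αk+1)`. -/
noncomputable def ML (α z : ℝ) : ℝ := ∑' k : ℕ, z ^ k / Real.Gamma (α * k + 1)

open Real Filter Topology

noncomputable def mlTerm (α z : ℝ) (k : ℕ) : ℝ := z ^ k / Gamma (α * k + 1)

@[simp] lemma mlTerm_zero (α z : ℝ) : mlTerm α z 0 = 1 := by simp [mlTerm]

lemma rpow_mul_exp_neg_le_Gamma {R s : ℝ} (hR : 0 < R) (hs : 1 ≤ s) :
    R ^ (s - 1) * exp (-R) ≤ Gamma s := by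
  have hint : IntegrableOn (fun x => exp (-x) * x ^ (s - 1)) (Ioi 0) :=
    GammaIntegral_convergent (by linarith)
  calc R ^ (s - 1) * exp (-R) = ∫ x in Ioi R, exp (-x) * R ^ (s - 1) := by
        rw [integral_mul_const, integral_exp_neg_Ioi, mul_comm]
    _ ≤ ∫ x in Ioi R, exp (-x) * x ^ (s - 1) :=
        setIntegral_mono_on ((integrableOn_exp_neg_Ioi R).mul_const _)
          (hint.mono_set (Ioi_subset_Ioi hR.le)) measurableSet_Ioi fun x hx =>
            mul_le_mul_of_nonneg_left (rpow_le_rpow hR.le (le_of_lt hx) (by linarith))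
              (exp_pos _).le
    _ ≤ ∫ x in Ioi 0, exp (-x) * x ^ (s - 1) :=
        setIntegral_mono_set hint
          (ae_restrict_of_forall_mem measurableSet_Ioi fun x hx =>
            mul_nonneg (exp_pos _).le (rpow_nonneg (le_of_lt hx) _))
          (Ioi_subset_Ioi hR.le).eventuallyLE
    _ = Gamma s := (Gamma_eq_integral (by linarith)).symm

lemma summable_mlTerm {α : ℝ} (hα : 0 < α) (z : ℝ) : Summable (mlTerm α z) := by
  -- `R ^ α = |z| + 1`, so the Gamma bound gives a geometric majorant of ratio `|z| / (|z| + 1)`.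
  set R := (|z| + 1) ^ α⁻¹
  have hR : 0 < R := by positivity
  have hq : |z| / (|z| + 1) < 1 := (div_lt_one (by positivity)).2 (lt_add_one _)
  refine Summable.of_norm_bounded
    ((summable_geometric_of_lt_one (by positivity) hq).mul_left (exp R)) fun k => ?_
  have hΓ : (|z| + 1) ^ k * exp (-R) ≤ Gamma (α * k + 1) := by
    have h := rpow_mul_exp_neg_le_Gamma hR (s := α * k + 1)
      (le_add_of_nonneg_left (by positivity))
    rwa [add_sub_cancel_right, rpow_mul hR.le, rpow_inv_rpow (by positivity) hα.ne',
      rpow_natCast] at h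
  have hΓpos : 0 < Gamma (α * k + 1) := Gamma_pos_of_pos (by positivity)
  rw [mlTerm, norm_div, norm_pow, norm_eq_abs, norm_eq_abs, abs_of_pos hΓpos, div_pow,
    div_le_iff₀ hΓpos]
  calc |z| ^ k = exp R * (|z| ^ k / (|z| + 1) ^ k) * ((|z| + 1) ^ k * exp (-R)) := by
        rw [exp_neg]; field_simp
    _ ≤ exp R * (|z| ^ k / (|z| + 1) ^ k) * Gamma (α * k + 1) := by gcongr

lemma le_mul_ML_of_forall_le {α x V M z : ℝ} (hα : 0 < α)
    (h : ∀ n, x ≤ V * ∑ k ∈ Finset.range n, mlTerm α z k + M * mlTerm α z n) :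
    x ≤ V * ML α z := by
  have hs := summable_mlTerm hα z
  have hlim : Tendsto (fun n => V * ∑ k ∈ Finset.range n, mlTerm α z k + M * mlTerm α z n) atTop
      (𝓝 (V * ML α z + M * 0)) :=
    (hs.hasSum.tendsto_sum_nat.const_mul V).add (hs.tendsto_atTop_zero.const_mul M)
  simpa using ge_of_tendsto' hlim h

lemma integral_rpow_mul_sub_rpow {p q L : ℝ} (hp : 0 < p) (hq : 0 < q) (hL : 0 < L) :
    ∫ x in (0)..L, x ^ (p - 1) * (L - x) ^ (q - 1)
      = Gamma p * Gamma q / Gamma (p + q) * L ^ (p + q - 1) := by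
  apply Complex.ofReal_injective
  have hB := Complex.Gamma_mul_Gamma_eq_betaIntegral (s := p) (t := q) (by simpa) (by simpa)
  have hΓ : Complex.Gamma (p + q) ≠ 0 := by
    rw [← Complex.ofReal_add, Complex.Gamma_ofReal]
    exact_mod_cast (Gamma_pos_of_pos (add_pos hp hq)).ne'
  rw [← intervalIntegral.integral_ofReal]
  calc _ = ∫ x in (0)..L, (x : ℂ) ^ ((p : ℂ) - 1) * ((L : ℂ) - x) ^ ((q : ℂ) - 1) := by
        refine intervalIntegral.integral_congr fun x hx => ?_
        rw [uIcc_of_le hL.le] at hx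
        push_cast [Complex.ofReal_cpow hx.1, Complex.ofReal_cpow (sub_nonneg.2 hx.2)]
        rfl
    _ = _ := by
        rw [Complex.betaIntegral_scaled _ _ hL, eq_div_of_mul_eq hΓ ((mul_comm _ _).trans hB.symm)]
        push_cast [Complex.ofReal_cpow hL.le, ← Complex.Gamma_ofReal]
        ring

lemma integral_Icc_sub_rpow_mul_sub_rpow {α β c d : ℝ} (hα : 0 < α) (hβ : 0 ≤ β) (hcd : c ≤ d) :
    ∫ y in Icc c d, (d - y) ^ (α - 1) * (y - c) ^ β
      = Gamma α * Gamma (β + 1) / Gamma (α + β + 1) * (d - c) ^ (α + β) := by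
  rcases hcd.eq_or_lt with rfl | hcd
  · simp [zero_rpow (by positivity : α + β ≠ 0)]
  rw [integral_Icc_eq_integral_Ioc, ← intervalIntegral.integral_of_le hcd.le]
  have h := integral_rpow_mul_sub_rpow (add_pos_of_nonneg_of_pos hβ one_pos) hα (sub_pos.2 hcd)
  rw [← sub_self c, ← intervalIntegral.integral_comp_sub_right] at h
  simp only [add_sub_cancel_right, sub_sub_sub_cancel_right] at h
  rw [intervalIntegral.integral_congr fun y _ => mul_comm _ _, h, add_comm (β + 1) α,
    show α + (β + 1) - 1 = α + β by ring, ← add_assoc, mul_comm (Gamma _)]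

lemma integrableOn_Icc_sub_rpow_mul_sub_rpow {α β c d : ℝ} (hα : 0 < α) (hβ : 0 ≤ β)
    (hcd : c ≤ d) : IntegrableOn (fun y => (d - y) ^ (α - 1) * (y - c) ^ β) (Icc c d) := by
  have h := (intervalIntegral.intervalIntegrable_rpow' (r := α - 1) (a := 0) (b := d - c)
    (by linarith)).comp_sub_left d
  rw [sub_zero, sub_sub_cancel] at h
  refine ((intervalIntegrable_iff_integrableOn_Icc_of_le hcd).1 h.symm).mul_continuousOn ?_
    isCompact_Icc
  exact (continuousOn_id.sub continuousOn_const).rpow_const fun _ _ => Or.inr hβ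

section Kernel

variable {ψ ψ' : ℝ → ℝ} {a s α β : ℝ}

lemma monotoneOn_Icc_of_hasDerivAt_nonneg (hcont : ContinuousOn ψ (Icc a s))
    (hderiv : ∀ x ∈ Ioo a s, HasDerivAt ψ (ψ' x) x) (hψ' : ∀ x ∈ Ioo a s, 0 ≤ ψ' x) :
    MonotoneOn ψ (Icc a s) :=
  monotoneOn_of_hasDerivWithinAt_nonneg (convex_Icc a s) hcont
    (by simpa only [interior_Icc] using fun x hx => (hderiv x hx).hasDerivWithinAt)
    (by rwa [interior_Icc])

lemma integrableOn_kernel_mul_rpow (hα : 0 < α) (hβ : 0 ≤ β) (has : a ≤ s)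
    (hcont : ContinuousOn ψ (Icc a s)) (hderiv : ∀ x ∈ Ioo a s, HasDerivAt ψ (ψ' x) x)
    (hψ' : ∀ x ∈ Ioo a s, 0 ≤ ψ' x) :
    IntegrableOn (fun τ => ψ' τ * ((ψ s - ψ τ) ^ (α - 1) * (ψ τ - ψ a) ^ β)) (Icc a s) :=
  (integrableOn_Icc_deriv_smul_iff_of_deriv_nonneg hcont hderiv hψ' has).2 <|
    integrableOn_Icc_sub_rpow_mul_sub_rpow hα hβ <|
      monotoneOn_Icc_of_hasDerivAt_nonneg hcont hderiv hψ' (left_mem_Icc.2 has)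
        (right_mem_Icc.2 has) has

lemma integral_kernel_mul_rpow (hα : 0 < α) (hβ : 0 ≤ β) (has : a ≤ s)
    (hcont : ContinuousOn ψ (Icc a s)) (hderiv : ∀ x ∈ Ioo a s, HasDerivAt ψ (ψ' x) x)
    (hψ' : ∀ x ∈ Ioo a s, 0 ≤ ψ' x) :
    ∫ τ in Icc a s, ψ' τ * ((ψ s - ψ τ) ^ (α - 1) * (ψ τ - ψ a) ^ β)
      = Gamma α * Gamma (β + 1) / Gamma (α + β + 1) * (ψ s - ψ a) ^ (α + β) := by
  rw [← integral_Icc_sub_rpow_mul_sub_rpow hα hβ <|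
      monotoneOn_Icc_of_hasDerivAt_nonneg hcont hderiv hψ' (left_mem_Icc.2 has)
        (right_mem_Icc.2 has) has,
    ← integral_Icc_deriv_smul_of_deriv_nonneg hcont hderiv hψ' has]
  rfl

lemma mlTerm_mul_rpow {c x : ℝ} (hx : 0 ≤ x) (k : ℕ) :
    mlTerm α (c * x ^ α) k = c ^ k / Gamma (α * k + 1) * x ^ (α * k) := by
  rw [mlTerm, mul_pow, ← rpow_natCast (x ^ α), ← rpow_mul hx]
  ring

lemma kernel_mul_mlTerm_eqOn (hψ : MonotoneOn ψ (Icc a s)) (c : ℝ) (k : ℕ) :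
    EqOn (fun τ => ψ' τ * (ψ s - ψ τ) ^ (α - 1) * mlTerm α (c * (ψ τ - ψ a) ^ α) k)
      (fun τ => c ^ k / Gamma (α * k + 1) *
        (ψ' τ * ((ψ s - ψ τ) ^ (α - 1) * (ψ τ - ψ a) ^ (α * k)))) (Icc a s) := fun τ hτ => by
  simp only [mlTerm_mul_rpow (sub_nonneg.2 (hψ (left_mem_Icc.2 (hτ.1.trans hτ.2)) hτ hτ.1))]
  ring

lemma integrableOn_kernel_mul_mlTerm (hα : 0 < α) (has : a ≤ s)
    (hcont : ContinuousOn ψ (Icc a s)) (hderiv : ∀ x ∈ Ioo a s, HasDerivAt ψ (ψ' x) x)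
    (hψ' : ∀ x ∈ Ioo a s, 0 ≤ ψ' x) (c : ℝ) (k : ℕ) :
    IntegrableOn (fun τ => ψ' τ * (ψ s - ψ τ) ^ (α - 1) * mlTerm α (c * (ψ τ - ψ a) ^ α) k)
      (Icc a s) :=
  IntegrableOn.congr_fun
    ((integrableOn_kernel_mul_rpow hα (by positivity) has hcont hderiv hψ').const_mul _)
    (kernel_mul_mlTerm_eqOn (monotoneOn_Icc_of_hasDerivAt_nonneg hcont hderiv hψ') c k).symm
    measurableSet_Icc

lemma mul_integral_kernel_mul_mlTerm (hα : 0 < α) (has : a ≤ s)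
    (hcont : ContinuousOn ψ (Icc a s)) (hderiv : ∀ x ∈ Ioo a s, HasDerivAt ψ (ψ' x) x)
    (hψ' : ∀ x ∈ Ioo a s, 0 ≤ ψ' x) (K : ℝ) (k : ℕ) :
    K * ∫ τ in Icc a s, ψ' τ * (ψ s - ψ τ) ^ (α - 1) * mlTerm α (K * Gamma α * (ψ τ - ψ a) ^ α) k
      = mlTerm α (K * Gamma α * (ψ s - ψ a) ^ α) (k + 1) := by
  have hψ := monotoneOn_Icc_of_hasDerivAt_nonneg hcont hderiv hψ'
  rw [setIntegral_congr_fun measurableSet_Icc (kernel_mul_mlTerm_eqOn hψ _ k), integral_const_mul,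
    integral_kernel_mul_rpow hα (by positivity) has hcont hderiv hψ',
    mlTerm_mul_rpow (sub_nonneg.2 (hψ (left_mem_Icc.2 has) (right_mem_Icc.2 has) has))]
  have hΓk : Gamma (α * k + 1) ≠ 0 := (Gamma_pos_of_pos (by positivity)).ne'
  rw [show α + α * k = α * (k + 1 : ℕ) by push_cast; ring]
  field_simp
  ring

end Kernel

theorem le_sum_mlTerm_of_forall_le_add_mul_integral {ψ ψ' u : ℝ → ℝ} {a t α V K M : ℝ}
    (hα : 0 < α) (hcont : ContinuousOn ψ (Icc a t))
    (hderiv : ∀ x ∈ Ioo a t, HasDerivAt ψ (ψ' x) x) (hψ' : ∀ x ∈ Ioo a t, 0 ≤ ψ' x)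
    (hM : ∀ s ∈ Icc a t, u s ≤ M)
    (hstep : ∀ s ∈ Icc a t, ∀ φ : ℝ → ℝ, (∀ τ ∈ Icc a s, u τ ≤ φ τ) →
      IntegrableOn (fun τ => ψ' τ * (ψ s - ψ τ) ^ (α - 1) * φ τ) (Icc a s) →
      u s ≤ V + K * ∫ τ in Icc a s, ψ' τ * (ψ s - ψ τ) ^ (α - 1) * φ τ)
    (n : ℕ) : ∀ s ∈ Icc a t,
      u s ≤ V * ∑ k ∈ Finset.range n, mlTerm α (K * Gamma α * (ψ s - ψ a) ^ α) k
        + M * mlTerm α (K * Gamma α * (ψ s - ψ a) ^ α) n := by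
  induction n with
  | zero => simpa using hM
  | succ n ih =>
    intro s hs
    have hcont_s := hcont.mono (Icc_subset_Icc_right hs.2)
    have hderiv_s : ∀ x ∈ Ioo a s, HasDerivAt ψ (ψ' x) x :=
      fun x hx => hderiv x ⟨hx.1, hx.2.trans_le hs.2⟩
    have hψ'_s : ∀ x ∈ Ioo a s, 0 ≤ ψ' x := fun x hx => hψ' x ⟨hx.1, hx.2.trans_le hs.2⟩
    set E : ℝ → ℕ → ℝ := fun τ k => mlTerm α (K * Gamma α * (ψ τ - ψ a) ^ α) k
    set kernel : ℝ → ℝ := fun τ => ψ' τ * (ψ s - ψ τ) ^ (α - 1)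
    have hint : ∀ k, IntegrableOn (fun τ => kernel τ * E τ k) (Icc a s) :=
      integrableOn_kernel_mul_mlTerm hα hs.1 hcont_s hderiv_s hψ'_s _
    have hsplit : (fun τ => kernel τ * (V * ∑ k ∈ Finset.range n, E τ k + M * E τ n))
        = fun τ => V * ∑ k ∈ Finset.range n, kernel τ * E τ k + M * (kernel τ * E τ n) := by
      funext τ
      rw [← Finset.mul_sum]
      ring
    have hint_sum : IntegrableOn
        (fun τ => V * ∑ k ∈ Finset.range n, kernel τ * E τ k + M * (kernel τ * E τ n)) (Icc a s) :=
      ((integrable_finsetSum _ fun k _ => hint k).const_mul V).add ((hint n).const_mul M)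
    calc u s ≤ V + K * ∫ τ in Icc a s, kernel τ * (V * ∑ k ∈ Finset.range n, E τ k + M * E τ n) :=
          hstep s hs _ (fun τ hτ => ih τ ⟨hτ.1, hτ.2.trans hs.2⟩) (hsplit ▸ hint_sum)
      _ = V + V * ∑ k ∈ Finset.range n, K * (∫ τ in Icc a s, kernel τ * E τ k)
            + M * (K * ∫ τ in Icc a s, kernel τ * E τ n) := by
          rw [hsplit, integral_add ((integrable_finsetSum _ fun k _ => hint k).const_mul V)
              ((hint n).const_mul M), integral_const_mul, integral_const_mul,
            integral_finsetSum _ fun k _ => hint k, ← Finset.mul_sum]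
          ring
      _ = V * ∑ k ∈ Finset.range (n + 1), E s k + M * E s (n + 1) := by
          simp only [kernel, E, mul_integral_kernel_mul_mlTerm hα hs.1 hcont_s hderiv_s hψ'_s]
          rw [Finset.sum_range_succ' _ n, mlTerm_zero]
          ring

lemma add_mul_integral_le_add_mul_integral {X : Type*} [MeasurableSpace X] {μ : Measure X}
    {f F : X → ℝ} {x y c C : ℝ} (hxy : x ≤ y) (hc : 0 ≤ c) (hcC : c ≤ C) (hf : 0 ≤ᵐ[μ] f)
    (hfF : f ≤ᵐ[μ] F) (hF : Integrable F μ) :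
    x + c * ∫ p, f p ∂μ ≤ y + C * ∫ p, F p ∂μ :=
  add_le_add hxy <| mul_le_mul hcC (integral_mono_of_nonneg hf hF hfF)
    (integral_nonneg_of_ae hf) (hc.trans hcC)

theorem le_add_mul_integral_of_frozen_coefficients {a b s t α : ℝ} {ψ u v g φ : ℝ → ℝ}
    {r : ℝ → ℝ → ℝ} (hψ : MonotoneOn ψ (Icc a b)) (hψ' : ∀ τ ∈ Icc a b, 0 ≤ deriv ψ τ)
    (hu0 : ∀ τ ∈ Icc a b, 0 ≤ u τ) (hvmono : MonotoneOn v (Icc a b))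
    (hg0 : ∀ τ ∈ Icc a b, 0 ≤ g τ) (hgmono : MonotoneOn g (Icc a b))
    (hr0 : ∀ t τ, a ≤ τ → τ ≤ t → t ≤ b → 0 ≤ r t τ)
    (hrdiagmono : MonotoneOn (fun t => r t t) (Icc a b))
    (hrdiag : ∀ t τ, a ≤ τ → τ ≤ t → t ≤ b → r t τ ≤ r t t)
    (ht : t ∈ Icc a b) (hs : s ∈ Icc a t)
    (hineq : u s ≤ v s + g s * ∫ τ in a..s, deriv ψ τ * (ψ s - ψ τ) ^ (α - 1) * r s τ * u τ)
    (hφ : ∀ τ ∈ Icc a s, u τ ≤ φ τ)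
    (hint : IntegrableOn (fun τ => deriv ψ τ * (ψ s - ψ τ) ^ (α - 1) * φ τ) (Icc a s)) :
    u s ≤ v t + g t * r t t * ∫ τ in Icc a s, deriv ψ τ * (ψ s - ψ τ) ^ (α - 1) * φ τ := by
  have hsI : s ∈ Icc a b := ⟨hs.1, hs.2.trans ht.2⟩
  have hτI : ∀ τ ∈ Icc a s, τ ∈ Icc a b := fun τ hτ => ⟨hτ.1, hτ.2.trans hsI.2⟩
  have hkernel : ∀ τ ∈ Icc a s, 0 ≤ deriv ψ τ * (ψ s - ψ τ) ^ (α - 1) := fun τ hτ =>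
    mul_nonneg (hψ' τ (hτI τ hτ)) (rpow_nonneg (sub_nonneg.2 (hψ (hτI τ hτ) hsI hτ.2)) _)
  have hru : ∀ τ ∈ Icc a s, r s τ * u τ ≤ r t t * φ τ := fun τ hτ =>
    mul_le_mul ((hrdiag s τ hτ.1 hτ.2 hsI.2).trans (hrdiagmono hsI ht hs.2)) (hφ τ hτ)
      (hu0 τ (hτI τ hτ)) (hr0 t t ht.1 le_rfl ht.2)
  calc u s ≤ v s + g s * ∫ τ in Icc a s, deriv ψ τ * (ψ s - ψ τ) ^ (α - 1) * (r s τ * u τ) := by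
        simpa only [intervalIntegral.integral_of_le hs.1, integral_Icc_eq_integral_Ioc, mul_assoc]
          using hineq
    _ ≤ v t + g t * ∫ τ in Icc a s, r t t * (deriv ψ τ * (ψ s - ψ τ) ^ (α - 1) * φ τ) :=
        add_mul_integral_le_add_mul_integral (hvmono hsI ht hs.2) (hg0 s hsI)
          (hgmono hsI ht hs.2)
          (ae_restrict_of_forall_mem measurableSet_Icc fun τ hτ =>
            mul_nonneg (hkernel τ hτ) (mul_nonneg (hr0 s τ hτ.1 hτ.2 hsI.2) (hu0 τ (hτI τ hτ))))
          (ae_restrict_of_forall_mem measurableSet_Icc fun τ hτ =>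
            (mul_le_mul_of_nonneg_left (hru τ hτ) (hkernel τ hτ)).trans_eq (mul_left_comm _ _ _))
          (hint.const_mul _)
    _ = v t + g t * r t t * ∫ τ in Icc a s, deriv ψ τ * (ψ s - ψ τ) ^ (α - 1) * φ τ := by
        rw [integral_const_mul, mul_assoc]

theorem generalized_gronwall_mittagLeffler_general
    (a b α : ℝ) (ψ : ℝ → ℝ) (u v g : ℝ → ℝ) (r : ℝ → ℝ → ℝ)
    (hα0 : 0 < α)
    (hmono : StrictMonoOn ψ (Icc a b))
    (hC1 : ContDiffOn ℝ 1 ψ (Icc a b))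
    (hψ'pos : ∀ t ∈ Icc a b, 0 < deriv ψ t)
    (hu : ContinuousOn u (Icc a b)) (hu0 : ∀ t ∈ Icc a b, 0 ≤ u t)
    (hvmono : MonotoneOn v (Icc a b))
    (hg0 : ∀ t ∈ Icc a b, 0 ≤ g t)
    (hgmono : MonotoneOn g (Icc a b))
    (hr0 : ∀ t τ, a ≤ τ → τ ≤ t → t ≤ b → 0 ≤ r t τ)
    (hrdiagmono : MonotoneOn (fun t => r t t) (Icc a b))
    (hrdiag : ∀ t τ, a ≤ τ → τ ≤ t → t ≤ b → r t τ ≤ r t t)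
    (hineq : ∀ t ∈ Icc a b,
      u t ≤ v t + g t * ∫ τ in a..t, deriv ψ τ * (ψ t - ψ τ) ^ (α - 1) * r t τ * u τ) :
    ∀ t ∈ Icc a b,
      u t ≤ v t * ML α (g t * r t t * Real.Gamma α * (ψ t - ψ a) ^ α) := by
  intro t ht
  have hsub : Icc a t ⊆ Icc a b := Icc_subset_Icc_right ht.2
  have hderiv : ∀ x ∈ Ioo a t, HasDerivAt ψ (deriv ψ x) x := fun x hx =>
    ((hC1.contDiffAt (Icc_mem_nhds hx.1 (hx.2.trans_le ht.2))).differentiableAt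
      one_ne_zero).hasDerivAt
  obtain ⟨x₀, -, hmax⟩ := isCompact_Icc.exists_isMaxOn (nonempty_Icc.2 ht.1) (hu.mono hsub)
  refine le_mul_ML_of_forall_le (M := u x₀) hα0 fun n => ?_
  refine le_sum_mlTerm_of_forall_le_add_mul_integral hα0 (hC1.continuousOn.mono hsub) hderiv
    (fun x hx => (hψ'pos x (hsub (Ioo_subset_Icc_self hx))).le) hmax
    (fun s hs φ hφ hint => ?_) n t (right_mem_Icc.2 ht.1)
  exact le_add_mul_integral_of_frozen_coefficients hmono.monotoneOn (fun τ hτ => (hψ'pos τ hτ).le)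
    hu0 hvmono hg0 hgmono hr0 hrdiagmono hrdiag ht hs (hineq s (hsub hs)) hφ hint

theorem generalized_gronwall_mittagLeffler
    (a b α : ℝ) (ψ : ℝ → ℝ) (u v g : ℝ → ℝ) (r : ℝ → ℝ → ℝ)
    (hα0 : 0 < α) (hα1 : α ≤ 1) (hab : a ≤ b)
    (hmono : StrictMonoOn ψ (Icc a b))
    (hC1 : ContDiffOn ℝ 1 ψ (Icc a b))
    (hψ'pos : ∀ t ∈ Icc a b, 0 < deriv ψ t)
    (hu : ContinuousOn u (Icc a b)) (hu0 : ∀ t ∈ Icc a b, 0 ≤ u t)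
    (hv : ContinuousOn v (Icc a b)) (hv0 : ∀ t ∈ Icc a b, 0 ≤ v t)
    (hvmono : MonotoneOn v (Icc a b))
    (hg : ContinuousOn g (Icc a b)) (hg0 : ∀ t ∈ Icc a b, 0 ≤ g t)
    (hgmono : MonotoneOn g (Icc a b))
    (hr : ContinuousOn (fun p : ℝ × ℝ => r p.1 p.2)
      {p : ℝ × ℝ | a ≤ p.2 ∧ p.2 ≤ p.1 ∧ p.1 ≤ b})
    (hr0 : ∀ t τ, a ≤ τ → τ ≤ t → t ≤ b → 0 ≤ r t τ)
    (hrdiagmono : MonotoneOn (fun t => r t t) (Icc a b))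
    (hrdiag : ∀ t τ, a ≤ τ → τ ≤ t → t ≤ b → r t τ ≤ r t t)
    (hineq : ∀ t ∈ Icc a b,
      u t ≤ v t + g t * ∫ τ in a..t, deriv ψ τ * (ψ t - ψ τ) ^ (α - 1) * r t τ * u τ) :
    ∀ t ∈ Icc a b,
      u t ≤ v t * ML α (g t * r t t * Real.Gamma α * (ψ t - ψ a) ^ α) :=
  generalized_gronwall_mittagLeffler_general a b α ψ u v g r hα0 hmono hC1 hψ'pos hu hu0 hvmono hg0
    hgmono hr0 hrdiagmono hrdiag hineq
end

section
/- (Contraction estimate for the Volterra operator) Let 0 < α ≤ 1, ψ increasing C¹ on I = [a,b], L > 0, M ≥ 0, ξ = Lδ for some δ > 1, and suppose f, k are continuous with ‖f(t,u,v) − f(t,ū,v̄)‖ ≤ M(‖u−ū‖ + ‖v−v̄‖) and ‖k(t,s,u) − k(t,s,ū)‖ ≤ L‖u−ū‖. Define (Tx)(t) = f(t, x(t), (1/Γ(α)) ∫_a^t ψ'(s)(ψ(t)−ψ(s))^{α−1} k(t,s,x(s)) ds). Then for all continuous u, v : I → ℝⁿ, d_{ξ,∞}(Tu, Tv) ≤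 M(1 + 1/δ) d_{ξ,∞}(u,v), where d_{ξ,∞}(u,v) = sup_{t∈I} ‖u(t)−v(t)‖/E_α(ξ(ψ(t)−ψ(a))^α). -/
open MeasureTheory Set

/-- The inner Volterra integral operator. -/
noncomputable def volterraK {n : ℕ} (α : ℝ) (ψ : ℝ → ℝ) (a : ℝ)
    (k : ℝ → ℝ → EuclideanSpace ℝ (Fin n) → EuclideanSpace ℝ (Fin n))
    (x : ℝ → EuclideanSpace ℝ (Fin n)) (t : ℝ) : EuclideanSpace ℝ (Fin n) :=
  (Real.Gamma α)⁻¹ • ∫ s in a..t, (deriv ψ s * (ψ t - ψ s) ^ (α - 1)) • k t s (x s)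

/-- The weighted sup-distance `d_{ξ,∞}` between two functions on `[a,b]`. -/
noncomputable def dXi {n : ℕ} (a b ξ α : ℝ) (ψ : ℝ → ℝ)
    (x y : ℝ → EuclideanSpace ℝ (Fin n)) : ℝ :=
  ⨆ t : Icc a b, ‖x t.1 - y t.1‖ / ML α (ξ * (ψ t.1 - ψ a) ^ α)

/-!
Write `d = d_{ξ,∞}(u, v)` and `w(t) = E_α(ξ (ψ t - ψ a)^α)`, so that `‖u s - v s‖ ≤ d w(s)`.
Since `f` is `M`-Lipschitz in its last two arguments, it suffices to bound the Volterra part by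
`(L d / ξ) (w(t) - 1)`. The integrand is at most `L d ψ'(s) (ψ t - ψ s)^(α-1) w(s)`, and the
substitution `x = ψ s` turns its integral into `∫_c^T (T - x)^(α-1) E_α(ξ (x - c)^α) dx` with
`c = ψ a`, `T = ψ t`. Integrating the Mittag-Leffler series term by term, the Beta integral maps the
`k`-th term to `Γ(α) / ξ` times the `(k+1)`-st, so this integral equals
`Γ(α) (E_α(ξ (T - c)^α) - 1) / ξ`. As `L / ξ = 1 / δ`, the
two contributions add up to `M (1 + 1/δ) d w(t)`.
-/

open Filter Topology

namespace Real

theorem Gamma_add_one_le_rpow_mul_Gamma_add {α y : ℝ} (hα0 : 0 < α) (hα1 : α ≤ 1) (hy : 0 < y) :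
    Gamma (y + 1) ≤ (y + α) ^ (1 - α) * Gamma (y + α) := by
  have hyα : 0 < y + α := by linarith
  have hconv := convexOn_log_Gamma.2 (mem_Ioi.2 hyα) (mem_Ioi.2 (by linarith : 0 < y + α + 1))
    hα0.le (by linarith : 0 ≤ 1 - α) (by ring)
  simp only [Function.comp_apply, smul_eq_mul,
    show α * (y + α) + (1 - α) * (y + α + 1) = y + 1 by ring, Gamma_add_one hyα.ne',
    log_mul hyα.ne' (Gamma_pos_of_pos hyα).ne'] at hconv
  rw [← exp_le_exp, exp_log (Gamma_pos_of_pos (by linarith))] at hconv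
  calc Gamma (y + 1) ≤ exp ((1 - α) * log (y + α) + log (Gamma (y + α))) := by
        convert hconv using 2; ring
    _ = (y + α) ^ (1 - α) * Gamma (y + α) := by
        rw [exp_add, exp_log (Gamma_pos_of_pos hyα), rpow_def_of_pos hyα, mul_comm (1 - α)]

theorem tendsto_Gamma_div_Gamma_add_atTop {α : ℝ} (hα0 : 0 < α) (hα1 : α ≤ 1) :
    Tendsto (fun y => Gamma y / Gamma (y + α)) atTop (𝓝 0) := by
  have hlim : Tendsto (fun y => 2 * (y + α) ^ (-α)) atTop (𝓝 0) := by
    simpa using ((tendsto_rpow_neg_atTop hα0).comp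
      (tendsto_atTop_add_const_right _ α tendsto_id)).const_mul 2
  refine squeeze_zero' ?_ ?_ hlim
  · filter_upwards [eventually_gt_atTop 0] with y hy
    exact div_nonneg (Gamma_pos_of_pos hy).le (Gamma_pos_of_pos (by linarith)).le
  filter_upwards [eventually_ge_atTop α] with y hy
  have hy0 : 0 < y := by linarith
  have hyα : 0 < y + α := by linarith
  have hΓ := Gamma_add_one_le_rpow_mul_Gamma_add hα0 hα1 hy0
  rw [Gamma_add_one hy0.ne', sub_eq_add_neg, rpow_add hyα, rpow_one] at hΓ
  rw [div_le_iff₀ (Gamma_pos_of_pos hyα)]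
  nlinarith [mul_pos (rpow_pos_of_pos hyα (-α)) (Gamma_pos_of_pos hyα)]

end Real

section MittagLeffler

variable {α : ℝ}

theorem summable_pow_div_Gamma_mul_add_one (hα0 : 0 < α) (hα1 : α ≤ 1) (z : ℝ) :
    Summable fun k : ℕ => z ^ k / Real.Gamma (α * k + 1) := by
  have hratio : Tendsto (fun k : ℕ => |z| * (Real.Gamma (α * k + 1) / Real.Gamma (α * k + 1 + α)))
      atTop (𝓝 0) := by
    simpa using ((Real.tendsto_Gamma_div_Gamma_add_atTop hα0 hα1).comp
      (tendsto_atTop_add_const_right _ 1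
        (tendsto_natCast_atTop_atTop.const_mul_atTop hα0))).const_mul |z|
  refine summable_of_ratio_norm_eventually_le (by norm_num : (1 / 2 : ℝ) < 1) ?_
  filter_upwards [hratio.eventually_le_const (by norm_num : (0 : ℝ) < 1 / 2)] with k hk
  rw [show α * ↑(k + 1) + 1 = α * k + 1 + α by push_cast; ring, norm_div, norm_div, norm_pow,
    norm_pow, Real.norm_of_nonneg (Real.Gamma_pos_of_pos (by positivity)).le,
    Real.norm_of_nonneg (Real.Gamma_pos_of_pos (by positivity)).le, pow_succ]
  calc ‖z‖ ^ k * ‖z‖ / Real.Gamma (α * k + 1 + α)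
      = |z| * (Real.Gamma (α * k + 1) / Real.Gamma (α * k + 1 + α)) *
          (‖z‖ ^ k / Real.Gamma (α * k + 1)) := by
        rw [Real.norm_eq_abs]; field_simp
    _ ≤ 1 / 2 * (‖z‖ ^ k / Real.Gamma (α * k + 1)) := by gcongr

theorem hasSum_ML (hα0 : 0 < α) (hα1 : α ≤ 1) (z : ℝ) :
    HasSum (fun k : ℕ => z ^ k / Real.Gamma (α * k + 1)) (ML α z) :=
  (summable_pow_div_Gamma_mul_add_one hα0 hα1 z).hasSum

theorem one_le_ML {z : ℝ} (hα0 : 0 < α) (hα1 : α ≤ 1) (hz : 0 ≤ z) : 1 ≤ ML α z := by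
  simpa [ML] using (summable_pow_div_Gamma_mul_add_one hα0 hα1 z).le_tsum 0 fun k _ =>
    div_nonneg (pow_nonneg hz k) (Real.Gamma_pos_of_pos (by positivity)).le

theorem continuous_ML (hα0 : 0 < α) (hα1 : α ≤ 1) : Continuous (ML α) := by
  refine continuous_iff_continuousAt.2 fun z => ?_
  set R := |z| + 1
  have hR : ContinuousOn (ML α) (Icc (-R) R) :=
    continuousOn_tsum (fun k => (continuousOn_pow k).div_const _)
      (summable_pow_div_Gamma_mul_add_one hα0 hα1 R) fun k x hx => by
        rw [norm_div, norm_pow, Real.norm_of_nonneg (Real.Gamma_pos_of_pos (by positivity)).le]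
        gcongr
        exact abs_le.2 hx
  exact hR.continuousAt (Icc_mem_nhds (by linarith [neg_abs_le z]) (by linarith [le_abs_self z]))

end MittagLeffler

section FractionalIntegral

variable {α c T : ℝ}

theorem integral_sub_rpow_mul_rpow_sub {e : ℝ} (hα : 0 < α) (he : -1 < e) (hcT : c < T) :
    ∫ x in c..T, (T - x) ^ (α - 1) * (x - c) ^ e =
      Real.Gamma α * Real.Gamma (e + 1) / Real.Gamma (α + e + 1) * (T - c) ^ (α + e) := by
  have hS : 0 < T - c := sub_pos.2 hcT
  have hshift : ∫ x in c..T, (T - x) ^ (α - 1) * (x - c) ^ e =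
      ∫ y in (0 : ℝ)..T - c, y ^ (e + 1 - 1) * (T - c - y) ^ (α - 1) := by
    rw [← sub_self c, ← intervalIntegral.integral_comp_sub_right]
    refine intervalIntegral.integral_congr fun x _ => ?_
    simp only [add_sub_cancel_right, sub_sub_sub_cancel_right, mul_comm]
  have hcast : ∫ y in (0 : ℝ)..T - c, ((y ^ (e + 1 - 1) * (T - c - y) ^ (α - 1) : ℝ) : ℂ) =
      ∫ y in (0 : ℝ)..T - c,
        (y : ℂ) ^ (((e + 1 : ℝ) : ℂ) - 1) * ((T - c : ℝ) - (y : ℂ)) ^ ((α : ℂ) - 1) := by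
    refine intervalIntegral.integral_congr fun y hy => ?_
    rw [uIcc_of_le hS.le] at hy
    rw [Complex.ofReal_mul, Complex.ofReal_cpow hy.1, Complex.ofReal_cpow (by linarith [hy.2])]
    push_cast; ring_nf
  have hbeta := Complex.betaIntegral_scaled (e + 1 : ℝ) α hS
  rw [Complex.betaIntegral_eq_Gamma_mul_div _ _ (by simp; linarith) (by simpa using hα),
    ← hcast, intervalIntegral.integral_ofReal,
    show ((e + 1 : ℝ) : ℂ) + α - 1 = ((α + e : ℝ) : ℂ) by push_cast; ring,
    ← Complex.ofReal_cpow hS.le, ← Complex.ofReal_add, Complex.Gamma_ofReal, Complex.Gamma_ofReal,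
    Complex.Gamma_ofReal] at hbeta
  have hreal : ∫ y in (0 : ℝ)..T - c, y ^ (e + 1 - 1) * (T - c - y) ^ (α - 1) =
      (T - c) ^ (α + e) * (Real.Gamma (e + 1) * Real.Gamma α / Real.Gamma (e + 1 + α)) := by
    exact_mod_cast hbeta
  rw [hshift, hreal, show α + e + 1 = e + 1 + α by ring]
  ring

theorem intervalIntegrable_sub_rpow_mul {g : ℝ → ℝ} (hα : 0 < α) (hg : ContinuousOn g (uIcc c T)) :
    IntervalIntegrable (fun x => (T - x) ^ (α - 1) * g x) volume c T := by
  have hw := (intervalIntegral.intervalIntegrable_rpow' (by linarith : -1 < α - 1)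
    (a := T - c) (b := 0)).comp_sub_left T
  simp only [sub_sub_cancel, sub_zero] at hw
  exact hw.mul_continuousOn hg

theorem mul_integral_sub_rpow_mul_pow_div_Gamma {ξ : ℝ} (hα : 0 < α) (hcT : c ≤ T) (k : ℕ) :
    ξ * ∫ x in c..T, (T - x) ^ (α - 1) * ((ξ * (x - c) ^ α) ^ k / Real.Gamma (α * k + 1)) =
      Real.Gamma α * ((ξ * (T - c) ^ α) ^ (k + 1) / Real.Gamma (α * ↑(k + 1) + 1)) := by
  rcases hcT.eq_or_lt with rfl | hlt
  · simp [Real.zero_rpow hα.ne']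
  have hpow : ∀ x, c ≤ x → ∀ m : ℕ, (ξ * (x - c) ^ α) ^ m = ξ ^ m * (x - c) ^ (α * m) :=
    fun x hx m => by rw [mul_pow, Real.rpow_mul_natCast (sub_nonneg.2 hx)]
  have hterm : ∀ x ∈ uIcc c T,
      (T - x) ^ (α - 1) * ((ξ * (x - c) ^ α) ^ k / Real.Gamma (α * k + 1)) =
        ξ ^ k / Real.Gamma (α * k + 1) * ((T - x) ^ (α - 1) * (x - c) ^ (α * k)) := by
    intro x hx
    rw [uIcc_of_le hcT] at hx
    rw [hpow x hx.1]; ring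
  have hΓ : Real.Gamma (α * k + 1) ≠ 0 := (Real.Gamma_pos_of_pos (by positivity)).ne'
  rw [intervalIntegral.integral_congr hterm, intervalIntegral.integral_const_mul,
    integral_sub_rpow_mul_rpow_sub hα (neg_one_lt_zero.trans_le (by positivity)) hlt, hpow T hcT,
    show α + α * k + 1 = α * ↑(k + 1) + 1 by push_cast; ring,
    show α + α * k = α * ↑(k + 1) by push_cast; ring]
  field_simp
  ring

theorem integral_sub_rpow_mul_ML {ξ : ℝ} (hα0 : 0 < α) (hα1 : α ≤ 1) (hξ : 0 < ξ) (hcT : c ≤ T) :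
    ∫ x in c..T, (T - x) ^ (α - 1) * ML α (ξ * (x - c) ^ α) =
      Real.Gamma α / ξ * (ML α (ξ * (T - c) ^ α) - 1) := by
  set F : ℕ → ℝ → ℝ := fun k x =>
    (T - x) ^ (α - 1) * ((ξ * (x - c) ^ α) ^ k / Real.Gamma (α * k + 1))
  have hbase : Continuous fun x => ξ * (x - c) ^ α :=
    continuous_const.mul ((continuous_sub_right c).rpow_const fun _ => Or.inr hα0.le)
  have hterm (k : ℕ) : Continuous fun x => (ξ * (x - c) ^ α) ^ k / Real.Gamma (α * k + 1) :=
    (hbase.pow k).div_const _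
  have hML : Continuous fun x => ML α (ξ * (x - c) ^ α) := (continuous_ML hα0 hα1).comp hbase
  have hF_sum (x : ℝ) : HasSum (F · x) ((T - x) ^ (α - 1) * ML α (ξ * (x - c) ^ α)) :=
    (hasSum_ML hα0 hα1 _).mul_left _
  have hF_nonneg (k : ℕ) : ∀ x ∈ uIoc c T, 0 ≤ F k x := by
    intro x hx
    rw [uIoc_of_le hcT] at hx
    have := Real.Gamma_pos_of_pos (by positivity : 0 < α * k + 1)
    have := Real.rpow_nonneg (sub_nonneg.2 hx.1.le) α
    exact mul_nonneg (Real.rpow_nonneg (sub_nonneg.2 hx.2) _) (by positivity)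
  have hseries := intervalIntegral.hasSum_integral_of_dominated_convergence F
    (fun k =>
      (intervalIntegrable_sub_rpow_mul hα0 (hterm k).continuousOn).def'.aestronglyMeasurable)
    (fun k => .of_forall fun x hx => (Real.norm_of_nonneg (hF_nonneg k x hx)).le)
    (.of_forall fun x _ => (hF_sum x).summable)
    (by simpa only [(hF_sum _).tsum_eq] using intervalIntegrable_sub_rpow_mul hα0 hML.continuousOn)
    (.of_forall fun x _ => hF_sum x)
  have hterms (k : ℕ) : ∫ x in c..T, F k x =
      Real.Gamma α / ξ * ((ξ * (T - c) ^ α) ^ (k + 1) / Real.Gamma (α * ↑(k + 1) + 1)) := by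
    rw [div_mul_eq_mul_div, eq_div_iff hξ.ne', mul_comm,
      mul_integral_sub_rpow_mul_pow_div_Gamma hα0 hcT]
  rw [funext hterms] at hseries
  have hshift := ((hasSum_nat_add_iff' 1).2 (hasSum_ML hα0 hα1 (ξ * (T - c) ^ α))).mul_left
    (Real.Gamma α / ξ)
  exact hseries.unique (by simpa using hshift)

end FractionalIntegral

theorem MonotoneOn.deriv_nonneg_of_mem_nhds {g : ℝ → ℝ} {s : Set ℝ} {x : ℝ}
    (hg : MonotoneOn g s) (hx : s ∈ 𝓝 x) : 0 ≤ deriv g x := by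
  rw [← derivWithin_of_mem_nhds hx]
  exact hg.derivWithin_nonneg

section ChangeOfVariables

variable {ψ g : ℝ → ℝ} {a b t : ℝ}

theorem Icc_mem_nhds_of_mem_Ioo_min_max (ht : t ∈ Icc a b) {s : ℝ}
    (hs : s ∈ Ioo (min a t) (max a t)) : Icc a b ∈ 𝓝 s := by
  rw [min_eq_left ht.1, max_eq_right ht.1] at hs
  exact Icc_mem_nhds hs.1 (hs.2.trans_le ht.2)

theorem intervalIntegrable_comp_mul_deriv_iff_of_monotoneOn (hψ : MonotoneOn ψ (Icc a b))
    (hψd : DifferentiableOn ℝ ψ (Icc a b)) (ht : t ∈ Icc a b) :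
    IntervalIntegrable (fun s => g (ψ s) * deriv ψ s) volume a t ↔
      IntervalIntegrable g volume (ψ a) (ψ t) :=
  intervalIntegral.integrable_comp_mul_deriv_iff_of_deriv_nonneg
    (hψd.continuousOn.mono (uIcc_subset_Icc (left_mem_Icc.2 (ht.1.trans ht.2)) ht))
    (fun _ hs => hψd.hasDerivAt (Icc_mem_nhds_of_mem_Ioo_min_max ht hs))
    (fun _ hs => hψ.deriv_nonneg_of_mem_nhds (Icc_mem_nhds_of_mem_Ioo_min_max ht hs))

theorem integral_comp_mul_deriv_of_monotoneOn (hψ : MonotoneOn ψ (Icc a b))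
    (hψd : DifferentiableOn ℝ ψ (Icc a b)) (ht : t ∈ Icc a b) :
    ∫ s in a..t, g (ψ s) * deriv ψ s = ∫ x in ψ a..ψ t, g x :=
  intervalIntegral.integral_comp_mul_deriv_of_deriv_nonneg
    (hψd.continuousOn.mono (uIcc_subset_Icc (left_mem_Icc.2 (ht.1.trans ht.2)) ht))
    (fun _ hs => hψd.hasDerivAt (Icc_mem_nhds_of_mem_Ioo_min_max ht hs))
    (fun _ hs => hψ.deriv_nonneg_of_mem_nhds (Icc_mem_nhds_of_mem_Ioo_min_max ht hs))

end ChangeOfVariables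

section Volterra

variable {n : ℕ} {α ξ L d a b t : ℝ} {ψ : ℝ → ℝ}
  {k : ℝ → ℝ → EuclideanSpace ℝ (Fin n) → EuclideanSpace ℝ (Fin n)}
  {u v x : ℝ → EuclideanSpace ℝ (Fin n)}

theorem intervalIntegrable_volterra_integrand (hα : 0 < α) (hψ : MonotoneOn ψ (Icc a b))
    (hψd : DifferentiableOn ℝ ψ (Icc a b))
    (hk : Continuous fun p : ℝ × ℝ × EuclideanSpace ℝ (Fin n) => k p.1 p.2.1 p.2.2)
    (hx : ContinuousOn x (Icc a b)) (ht : t ∈ Icc a b) :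
    IntervalIntegrable (fun s => (deriv ψ s * (ψ t - ψ s) ^ (α - 1)) • k t s (x s)) volume a t := by
  have hw := (intervalIntegrable_comp_mul_deriv_iff_of_monotoneOn
    (g := fun y => (ψ t - y) ^ (α - 1)) hψ hψd ht).2
    (by simpa using intervalIntegrable_sub_rpow_mul hα (continuousOn_const (c := (1 : ℝ))))
  simp only [mul_comm _ (deriv ψ _)] at hw
  exact hw.smul_continuousOn (hk.comp_continuousOn (continuousOn_const.prodMk
    (continuousOn_id.prodMk (hx.mono (uIcc_subset_Icc (left_mem_Icc.2 (ht.1.trans ht.2)) ht)))))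

theorem volterraK_sub_volterraK (hα : 0 < α) (hψ : MonotoneOn ψ (Icc a b))
    (hψd : DifferentiableOn ℝ ψ (Icc a b))
    (hk : Continuous fun p : ℝ × ℝ × EuclideanSpace ℝ (Fin n) => k p.1 p.2.1 p.2.2)
    (hu : ContinuousOn u (Icc a b)) (hv : ContinuousOn v (Icc a b)) (ht : t ∈ Icc a b) :
    volterraK α ψ a k u t - volterraK α ψ a k v t = (Real.Gamma α)⁻¹ •
      ∫ s in a..t, (deriv ψ s * (ψ t - ψ s) ^ (α - 1)) • (k t s (u s) - k t s (v s)) := by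
  simp only [volterraK, smul_sub]
  rw [← smul_sub, intervalIntegral.integral_sub
    (intervalIntegrable_volterra_integrand hα hψ hψd hk hu ht)
    (intervalIntegrable_volterra_integrand hα hψ hψd hk hv ht)]

theorem norm_volterra_integrand_sub_le (hL : 0 ≤ L) (hψ : MonotoneOn ψ (Icc a b))
    (hkLip : ∀ s x y, ‖k t s x - k t s y‖ ≤ L * ‖x - y‖)
    (hd : ∀ s ∈ Icc a b, ‖u s - v s‖ ≤ d * ML α (ξ * (ψ s - ψ a) ^ α)) (ht : t ∈ Icc a b)
    {s : ℝ} (hs : s ∈ Ioo a t) :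
    ‖(deriv ψ s * (ψ t - ψ s) ^ (α - 1)) • (k t s (u s) - k t s (v s))‖ ≤
      L * d * ((ψ t - ψ s) ^ (α - 1) * ML α (ξ * (ψ s - ψ a) ^ α) * deriv ψ s) := by
  have hsab : s ∈ Icc a b := ⟨hs.1.le, hs.2.le.trans ht.2⟩
  have hp : 0 ≤ deriv ψ s * (ψ t - ψ s) ^ (α - 1) :=
    mul_nonneg (hψ.deriv_nonneg_of_mem_nhds (Icc_mem_nhds hs.1 (hs.2.trans_le ht.2)))
      (Real.rpow_nonneg (sub_nonneg.2 (hψ hsab ht hs.2.le)) _)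
  rw [norm_smul, Real.norm_of_nonneg hp]
  calc deriv ψ s * (ψ t - ψ s) ^ (α - 1) * ‖k t s (u s) - k t s (v s)‖
      ≤ deriv ψ s * (ψ t - ψ s) ^ (α - 1) * (L * (d * ML α (ξ * (ψ s - ψ a) ^ α))) := by
        gcongr
        exact (hkLip s _ _).trans (by gcongr; exact hd s hsab)
    _ = L * d * ((ψ t - ψ s) ^ (α - 1) * ML α (ξ * (ψ s - ψ a) ^ α) * deriv ψ s) := by ring

theorem norm_volterraK_sub_le (hα0 : 0 < α) (hα1 : α ≤ 1) (hξ : 0 < ξ) (hL : 0 ≤ L)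
    (hψ : MonotoneOn ψ (Icc a b)) (hψd : DifferentiableOn ℝ ψ (Icc a b))
    (hk : Continuous fun p : ℝ × ℝ × EuclideanSpace ℝ (Fin n) => k p.1 p.2.1 p.2.2)
    (hkLip : ∀ s x y, ‖k t s x - k t s y‖ ≤ L * ‖x - y‖)
    (hu : ContinuousOn u (Icc a b)) (hv : ContinuousOn v (Icc a b))
    (hd : ∀ s ∈ Icc a b, ‖u s - v s‖ ≤ d * ML α (ξ * (ψ s - ψ a) ^ α)) (ht : t ∈ Icc a b) :
    ‖volterraK α ψ a k u t - volterraK α ψ a k v t‖ ≤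
      L * d / ξ * (ML α (ξ * (ψ t - ψ a) ^ α) - 1) := by
  have hG : IntervalIntegrable (fun s =>
      (ψ t - ψ s) ^ (α - 1) * ML α (ξ * (ψ s - ψ a) ^ α) * deriv ψ s) volume a t :=
    (intervalIntegrable_comp_mul_deriv_iff_of_monotoneOn hψ hψd ht).2
      (intervalIntegrable_sub_rpow_mul hα0 ((continuous_ML hα0 hα1).comp (continuous_const.mul
        ((continuous_sub_right _).rpow_const fun _ => Or.inr hα0.le))).continuousOn)
  -- the endpoint `s = t` is discarded, since `deriv ψ b` is a junk value in general
  have hbound : ∀ᵐ s, s ∈ Ioc a t →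
      ‖(deriv ψ s * (ψ t - ψ s) ^ (α - 1)) • (k t s (u s) - k t s (v s))‖ ≤
        L * d * ((ψ t - ψ s) ^ (α - 1) * ML α (ξ * (ψ s - ψ a) ^ α) * deriv ψ s) := by
    filter_upwards [(Ioo_ae_eq_Ioc (μ := volume) (a := a) (b := t)).mem_iff] with s hs hsIoc
    exact norm_volterra_integrand_sub_le hL hψ hkLip hd ht (hs.2 hsIoc)
  rw [volterraK_sub_volterraK hα0 hψ hψd hk hu hv ht, norm_smul,
    Real.norm_of_nonneg (inv_pos.2 (Real.Gamma_pos_of_pos hα0)).le]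
  calc (Real.Gamma α)⁻¹ * ‖∫ s in a..t,
        (deriv ψ s * (ψ t - ψ s) ^ (α - 1)) • (k t s (u s) - k t s (v s))‖
      ≤ (Real.Gamma α)⁻¹ * ∫ s in a..t,
          L * d * ((ψ t - ψ s) ^ (α - 1) * ML α (ξ * (ψ s - ψ a) ^ α) * deriv ψ s) := by
        gcongr
        exact intervalIntegral.norm_integral_le_of_norm_le ht.1 hbound (hG.const_mul _)
    _ = (Real.Gamma α)⁻¹ * (L * d *
          ∫ y in ψ a..ψ t, (ψ t - y) ^ (α - 1) * ML α (ξ * (y - ψ a) ^ α)) := by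
        rw [intervalIntegral.integral_const_mul, integral_comp_mul_deriv_of_monotoneOn
          (g := fun y => (ψ t - y) ^ (α - 1) * ML α (ξ * (y - ψ a) ^ α)) hψ hψd ht]
    _ = L * d / ξ * (ML α (ξ * (ψ t - ψ a) ^ α) - 1) := by
        rw [integral_sub_rpow_mul_ML hα0 hα1 hξ (hψ (left_mem_Icc.2 (ht.1.trans ht.2)) ht ht.1)]
        field_simp

end Volterra

section WeightedDistance

variable {n : ℕ} {α ξ a b : ℝ} {ψ : ℝ → ℝ} {x y : ℝ → EuclideanSpace ℝ (Fin n)}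

theorem one_le_ML_mul_rpow_sub (hα0 : 0 < α) (hα1 : α ≤ 1) (hξ : 0 ≤ ξ)
    (hψ : MonotoneOn ψ (Icc a b)) {t : ℝ} (ht : t ∈ Icc a b) :
    1 ≤ ML α (ξ * (ψ t - ψ a) ^ α) := by
  have := sub_nonneg.2 (hψ (left_mem_Icc.2 (ht.1.trans ht.2)) ht ht.1)
  exact one_le_ML hα0 hα1 (by positivity)

theorem dXi_nonneg (hα0 : 0 < α) (hα1 : α ≤ 1) (hξ : 0 ≤ ξ) (hψ : MonotoneOn ψ (Icc a b)) :
    0 ≤ dXi a b ξ α ψ x y :=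
  Real.iSup_nonneg fun t => div_nonneg (norm_nonneg _)
    (zero_le_one.trans (one_le_ML_mul_rpow_sub hα0 hα1 hξ hψ t.2))

theorem norm_sub_le_dXi_mul (hα0 : 0 < α) (hα1 : α ≤ 1) (hξ : 0 ≤ ξ)
    (hψ : MonotoneOn ψ (Icc a b)) (hx : ContinuousOn x (Icc a b)) (hy : ContinuousOn y (Icc a b))
    {t : ℝ} (ht : t ∈ Icc a b) :
    ‖x t - y t‖ ≤ dXi a b ξ α ψ x y * ML α (ξ * (ψ t - ψ a) ^ α) := by
  have hw := one_le_ML_mul_rpow_sub hα0 hα1 hξ hψ ht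
  obtain ⟨C, hC⟩ := isCompact_Icc.exists_bound_of_continuousOn (hx.sub hy)
  have hbdd : BddAbove (range fun s : Icc a b =>
      ‖x s.1 - y s.1‖ / ML α (ξ * (ψ s.1 - ψ a) ^ α)) := by
    refine ⟨C, forall_mem_range.2 fun s => ?_⟩
    exact (div_le_self (norm_nonneg _) (one_le_ML_mul_rpow_sub hα0 hα1 hξ hψ s.2)).trans (hC s s.2)
  rw [← div_le_iff₀ (zero_lt_one.trans_le hw)]
  exact le_ciSup hbdd ⟨t, ht⟩

theorem dXi_le_of_forall_norm_sub_le (hα0 : 0 < α) (hα1 : α ≤ 1) (hξ : 0 ≤ ξ)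
    (hψ : MonotoneOn ψ (Icc a b)) {C : ℝ} (hC : 0 ≤ C)
    (h : ∀ t ∈ Icc a b, ‖x t - y t‖ ≤ C * ML α (ξ * (ψ t - ψ a) ^ α)) :
    dXi a b ξ α ψ x y ≤ C :=
  Real.iSup_le (fun t => (div_le_iff₀ (zero_lt_one.trans_le
    (one_le_ML_mul_rpow_sub hα0 hα1 hξ hψ t.2))).2 (h t t.2)) hC

end WeightedDistance

theorem volterra_operator_contraction_general
    (n : ℕ) (a b α L M δ ξ : ℝ) (ψ : ℝ → ℝ)
    (f : ℝ → EuclideanSpace ℝ (Fin n) → EuclideanSpace ℝ (Fin n) → EuclideanSpace ℝ (Fin n))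
    (k : ℝ → ℝ → EuclideanSpace ℝ (Fin n) → EuclideanSpace ℝ (Fin n))
    (hα0 : 0 < α) (hα1 : α ≤ 1)
    (hmono : StrictMonoOn ψ (Icc a b)) (hC1 : ContDiffOn ℝ 1 ψ (Icc a b))
    (hL : 0 < L) (hM : 0 ≤ M) (hδ : 1 < δ) (hξ : ξ = L * δ)
    (hk : Continuous fun p : ℝ × ℝ × EuclideanSpace ℝ (Fin n) => k p.1 p.2.1 p.2.2)
    (hfLip : ∀ t u v u' v', ‖f t u v - f t u' v'‖ ≤ M * (‖u - u'‖ + ‖v - v'‖))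
    (hkLip : ∀ t s u u', ‖k t s u - k t s u'‖ ≤ L * ‖u - u'‖)
    (u v : ℝ → EuclideanSpace ℝ (Fin n))
    (hu : ContinuousOn u (Icc a b)) (hv : ContinuousOn v (Icc a b)) :
    dXi a b ξ α ψ (fun t => f t (u t) (volterraK α ψ a k u t))
        (fun t => f t (v t) (volterraK α ψ a k v t))
      ≤ M * (1 + 1 / δ) * dXi a b ξ α ψ u v := by
  have hδ0 : 0 < δ := by linarith
  have hξ0 : 0 < ξ := hξ ▸ mul_pos hL hδ0
  have hψ := hmono.monotoneOn
  set d := dXi a b ξ α ψ u v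
  have hd0 : 0 ≤ d := dXi_nonneg hα0 hα1 hξ0.le hψ
  have hd := fun t (ht : t ∈ Icc a b) => norm_sub_le_dXi_mul hα0 hα1 hξ0.le hψ hu hv ht
  refine dXi_le_of_forall_norm_sub_le hα0 hα1 hξ0.le hψ (by positivity) fun t ht => ?_
  set w := ML α (ξ * (ψ t - ψ a) ^ α)
  have hK := norm_volterraK_sub_le hα0 hα1 hξ0 hL.le hψ (hC1.differentiableOn one_ne_zero) hk
    (hkLip t) hu hv hd ht
  have hKw : L * d / ξ * (w - 1) ≤ d / δ * w := by
    rw [hξ, mul_div_mul_left _ _ hL.ne']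
    gcongr
    linarith
  calc ‖f t (u t) (volterraK α ψ a k u t) - f t (v t) (volterraK α ψ a k v t)‖
      ≤ M * (‖u t - v t‖ + ‖volterraK α ψ a k u t - volterraK α ψ a k v t‖) := hfLip _ _ _ _ _
    _ ≤ M * (d * w + d / δ * w) := by gcongr; exacts [hd t ht, hK.trans hKw]
    _ = M * (1 + 1 / δ) * d * w := by ring

theorem volterra_operator_contraction
    (n : ℕ) (a b α L M δ ξ : ℝ) (ψ : ℝ → ℝ)
    (f : ℝ → EuclideanSpace ℝ (Fin n) → EuclideanSpace ℝ (Fin n) → EuclideanSpace ℝ (Fin n))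
    (k : ℝ → ℝ → EuclideanSpace ℝ (Fin n) → EuclideanSpace ℝ (Fin n))
    (hα0 : 0 < α) (hα1 : α ≤ 1) (hab : a ≤ b)
    (hmono : StrictMonoOn ψ (Icc a b)) (hC1 : ContDiffOn ℝ 1 ψ (Icc a b))
    (hL : 0 < L) (hM : 0 ≤ M) (hδ : 1 < δ) (hξ : ξ = L * δ)
    (hf : Continuous fun p : ℝ × EuclideanSpace ℝ (Fin n) × EuclideanSpace ℝ (Fin n) =>
      f p.1 p.2.1 p.2.2)
    (hk : Continuous fun p : ℝ × ℝ × EuclideanSpace ℝ (Fin n) => k p.1 p.2.1 p.2.2)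
    (hfLip : ∀ t u v u' v', ‖f t u v - f t u' v'‖ ≤ M * (‖u - u'‖ + ‖v - v'‖))
    (hkLip : ∀ t s u u', ‖k t s u - k t s u'‖ ≤ L * ‖u - u'‖)
    (u v : ℝ → EuclideanSpace ℝ (Fin n))
    (hu : ContinuousOn u (Icc a b)) (hv : ContinuousOn v (Icc a b)) :
    dXi a b ξ α ψ (fun t => f t (u t) (volterraK α ψ a k u t))
        (fun t => f t (v t) (volterraK α ψ a k v t))
      ≤ M * (1 + 1 / δ) * dXi a b ξ α ψ u v :=
  volterra_operator_contraction_general n a b α L M δ ξ ψ f k hα0 hα1 hmono hC1 hL hM hδ hξ hk hfLip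
    hkLip u v hu hv
end
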